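/- Let Z be a set of positions in an m×n matrix containing k−1 zeros in independent position, and suppose that no row of the matrix belongs to every (k−1)-cover of Z. Then, after permuting rows and columns so that the (k−1)-assignment of zeros occupies positions (1,1), …, (k−1,k−1), the cover γ consisting of columns 1, …, k−1 is a (k−1)-cover of Z; equivalently, Q_{k,Z} has a maximal element consisting of a rectangle R(α) whose cover α uses only columns. -/

import Mathlib

open MeasureTheory ProbabilityTheory Finset

namespace Kassign

variable {m n : ℕ}

/-- A `k`-assignment: `k` positions in an `m × n` matrix, no two sharing a row or a column. -/
def IsAssignment (k : ℕ) (A : Finset (Fin m × Fin n)) : Prop :=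
  A.card = k ∧ ∀ p ∈ A, ∀ q ∈ A, p ≠ q → p.1 ≠ q.1 ∧ p.2 ≠ q.2

/-- A cover: a set of rows together with a set of columns. -/
structure Cover (m n : ℕ) where
  rows : Finset (Fin m)
  cols : Finset (Fin n)
deriving DecidableEq

namespace Cover

/-- The size of a cover: the number of rows and columns in it. -/
def size (α : Cover m n) : ℕ := α.rows.card + α.cols.card

/-- `α` covers `Z` if every position of `Z` lies in a row or a column of `α`. -/
def Covers (α : Cover m n) (Z : Finset (Fin m × Fin n)) : Prop :=
  ∀ p ∈ Z, p.1 ∈ α.rows ∨ p.2 ∈ α.cols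

/-- The rectangle of a cover: the positions lying in no row or column of the cover. -/
def rect (α : Cover m n) : Finset (Fin m × Fin n) := α.rowsᶜ ×ˢ α.colsᶜ

/-- The partial order on critical rectangles (modelled by their covers):
`R(α) ≤ R(β)` iff `cols α ⊆ cols β` and `rows α ⊇ rows β`. -/
instance : PartialOrder (Cover m n) where
  le α β := α.cols ⊆ β.cols ∧ β.rows ⊆ α.rows
  le_refl _ := ⟨subset_rfl, subset_rfl⟩
  le_trans _ _ _ h h' := ⟨h.1.trans h'.1, h'.2.trans h.2⟩
  le_antisymm := by
    rintro ⟨r1, c1⟩ ⟨r2, c2⟩ h h'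
    obtain ⟨h1, h2⟩ := h
    obtain ⟨h1', h2'⟩ := h'
    simp only [Cover.mk.injEq]
    exact ⟨Finset.Subset.antisymm h2' h2, Finset.Subset.antisymm h1 h1'⟩

instance : Fintype (Cover m n) :=
  Fintype.ofEquiv (Finset (Fin m) × Finset (Fin n))
    { toFun := fun p => ⟨p.1, p.2⟩
      invFun := fun α => (α.rows, α.cols)
      left_inv := fun _ => rfl
      right_inv := fun _ => rfl }

instance : DecidableRel (α := Cover m n) (· ≤ ·) :=
  fun a b => decidable_of_iff (a.cols ⊆ b.cols ∧ b.rows ⊆ a.rows) Iff.rfl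

instance : DecidableRel (α := Cover m n) (· < ·) :=
  fun a b => decidable_of_iff (a ≤ b ∧ ¬ b ≤ a) lt_iff_le_not_ge.symm

instance (Z : Finset (Fin m × Fin n)) : DecidablePred (fun α : Cover m n => α.Covers Z) :=
  fun α => decidable_of_iff (∀ p ∈ Z, p.1 ∈ α.rows ∨ p.2 ∈ α.cols) Iff.rfl

end Cover

instance {s : ℕ} (c : Fin s → Cover m n) : Decidable (StrictMono c) :=
  decidable_of_iff (∀ a b : Fin s, a < b → c a < c b) Iff.rfl

/-- `Q_{k,Z}` (for `j = k - 1`): the poset of critical rectangles, modelled by the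
`j`-covers of `Z`. -/
def criticalCovers (j : ℕ) (Z : Finset (Fin m × Fin n)) : Finset (Cover m n) :=
  Finset.univ.filter fun α => α.Covers Z ∧ α.size = j

/-- The rate `I(R)` of a set of positions: the sum of the rates of its entries. -/
def rate (lam : Fin m × Fin n → ℝ) (R : Finset (Fin m × Fin n)) : ℝ := ∑ p ∈ R, lam p

/-- `Z` contains `j` zeros in independent position. -/
def HasIndepZeros (j : ℕ) (Z : Finset (Fin m × Fin n)) : Prop :=
  ∃ A ⊆ Z, IsAssignment j A

variable {Ω : Type*} [MeasurableSpace Ω]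

/-- `Y` is an exponential random variable with rate `l` under `P`:
`P(Y > t) = e^{-l t}` for all `t ≥ 0`. -/
def IsExponential (P : Measure Ω) (Y : Ω → ℝ) (l : ℝ) : Prop :=
  Measurable Y ∧ ∀ t : ℝ, 0 ≤ t → P {ω | t < Y ω} = ENNReal.ofReal (Real.exp (-(l * t)))

/-- The random matrix model: entries at positions of `Z` are identically `0`; the other
entries are mutually independent exponential random variables, the entry at `p` having
positive rate `lam p`. -/
def MatrixModel (P : Measure Ω) (Z : Finset (Fin m × Fin n))
    (lam : Fin m × Fin n → ℝ) (X : Fin m × Fin n → Ω → ℝ) : Prop :=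
  (∀ p ∈ Z, ∀ ω, X p ω = 0) ∧
  (∀ p ∉ Z, 0 < lam p ∧ IsExponential P (X p) (lam p)) ∧
  iIndepFun (fun p : {p : Fin m × Fin n // p ∉ Z} => X p.1) P

/-- `min_k(M)`: the value of an optimal `k`-assignment. -/
noncomputable def minAssign (k : ℕ) (X : Fin m × Fin n → Ω → ℝ) (ω : Ω) : ℝ :=
  sInf {v | ∃ A : Finset (Fin m × Fin n), IsAssignment k A ∧ v = ∑ p ∈ A, X p ω}

/-- `min_k(M^r)`: the value of an optimal `k`-assignment avoiding row `r`
(i.e. in the matrix with row `r` deleted). -/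
noncomputable def minAssignAvoid (k : ℕ) (r : Fin m) (X : Fin m × Fin n → Ω → ℝ) (ω : Ω) : ℝ :=
  sInf {v | ∃ A : Finset (Fin m × Fin n), IsAssignment k A ∧ (∀ p ∈ A, p.1 ≠ r) ∧
    v = ∑ p ∈ A, X p ω}

/-- The Laplace transform `L(Y, t) = E[e^{-tY}]`. -/
noncomputable def laplace (P : Measure Ω) (Y : Ω → ℝ) (t : ℝ) : ℝ :=
  ∫ ω, Real.exp (-t * Y ω) ∂P

/-- `φ(R, t) = I(R) / (I(R) + t)`, the Laplace transform of an exponential variable of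
rate `I(R)`. -/
noncomputable def phi (lam : Fin m × Fin n → ℝ) (R : Cover m n) (t : ℝ) : ℝ :=
  rate lam R.rect / (rate lam R.rect + t)

/-- `g` is the (two-sided) inverse of `f` in the incidence algebra of the poset `S`. -/
def IsIncidenceInverse {C : Type*} [PartialOrder C] [DecidableEq C]
    [DecidableRel (α := C) (· ≤ ·)] (S : Finset C) (f g : C → C → ℝ) : Prop :=
  (∀ a ∈ S, ∀ b ∈ S,
    (∑ c ∈ S.filter fun c => a ≤ c ∧ c ≤ b, f a c * g c b) = if a = b then 1 else 0) ∧
  (∀ a ∈ S, ∀ b ∈ S,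
    (∑ c ∈ S.filter fun c => a ≤ c ∧ c ≤ b, g a c * f c b) = if a = b then 1 else 0)

/-- The column cover `γ` consisting of the first `j` columns (and no rows). -/
def colCover (m n j : ℕ) : Cover m n :=
  ⟨∅, Finset.univ.filter fun c : Fin n => (c : ℕ) < j⟩

/-- `K_i`: the intersection of the rectangle of `α` with row `i`. -/
def rowPart (α : Cover m n) (i : Fin m) : Finset (Fin m × Fin n) :=
  α.rect.filter fun p => p.1 = i



lemma cover_size_ge {j : ℕ} {Z : Finset (Fin m × Fin n)} (hZ : HasIndepZeros j Z)
    {α : Cover m n} (hα : α.Covers Z) : j ≤ α.size := by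
  classical
  obtain ⟨A, hAZ, hcard, hind⟩ := hZ
  have h : A.card ≤ (α.rows.disjSum α.cols).card := by
    apply Finset.card_le_card_of_injOn
      (fun p => if p.1 ∈ α.rows then Sum.inl p.1 else Sum.inr p.2)
    · intro p hp
      by_cases h : p.1 ∈ α.rows
      · simp [h]
      · have := hα p (hAZ hp)
        simp only [h, if_false, Finset.mem_coe, Finset.inr_mem_disjSum]
        tauto
    · intro p hp q hq hpq
      by_contra hne
      obtain ⟨h1, h2⟩ := hind p hp q hq hne
      by_cases h : p.1 ∈ α.rows <;> by_cases h' : q.1 ∈ α.rows <;> simp_all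
  rw [Finset.card_disjSum, hcard] at h
  exact h

lemma join_mem {j : ℕ} {Z : Finset (Fin m × Fin n)} (hZ : HasIndepZeros j Z)
    {α β : Cover m n} (hα : α ∈ criticalCovers j Z) (hβ : β ∈ criticalCovers j Z) :
    (⟨α.rows ∩ β.rows, α.cols ∪ β.cols⟩ : Cover m n) ∈ criticalCovers j Z := by
  simp only [criticalCovers, Finset.mem_filter, Finset.mem_univ, true_and] at *
  obtain ⟨hαc, hαs⟩ := hα
  obtain ⟨hβc, hβs⟩ := hβ
  have hjoin : Cover.Covers ⟨α.rows ∩ β.rows, α.cols ∪ β.cols⟩ Z := by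
    intro p hp
    rcases hαc p hp with h | h
    · rcases hβc p hp with h' | h'
      · exact Or.inl (Finset.mem_inter.2 ⟨h, h'⟩)
      · exact Or.inr (Finset.mem_union_right _ h')
    · exact Or.inr (Finset.mem_union_left _ h)
  have hmeet : Cover.Covers ⟨α.rows ∪ β.rows, α.cols ∩ β.cols⟩ Z := by
    intro p hp
    rcases hαc p hp with h | h
    · exact Or.inl (Finset.mem_union_left _ h)
    · rcases hβc p hp with h' | h'
      · exact Or.inl (Finset.mem_union_right _ h')
      · exact Or.inr (Finset.mem_inter.2 ⟨h, h'⟩)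
  refine ⟨hjoin, ?_⟩
  have h1 := cover_size_ge hZ hjoin
  have h2 := cover_size_ge hZ hmeet
  have e1 := Finset.card_inter_add_card_union α.rows β.rows
  have e2 := Finset.card_inter_add_card_union α.cols β.cols
  simp only [Cover.size] at *
  omega

lemma exists_top {j : ℕ} {Z : Finset (Fin m × Fin n)} (hZ : HasIndepZeros j Z) :
    ∀ S : Finset (Cover m n), S.Nonempty → S ⊆ criticalCovers j Z →
      ∃ α ∈ criticalCovers j Z, ∀ β ∈ S, β ≤ α := by
  intro S
  induction S using Finset.induction_on with
  | empty => intro h; simp at h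
  | @insert a S' ha ih =>
    intro _ hsub
    rcases S'.eq_empty_or_nonempty with rfl | hS'
    · refine ⟨a, hsub (Finset.mem_insert_self a ∅), ?_⟩
      intro β hβ
      rcases Finset.mem_insert.1 hβ with rfl | hβ
      · exact le_refl _
      · simp at hβ
    · obtain ⟨α, hα, hle⟩ := ih hS' (fun x hx => hsub (Finset.mem_insert_of_mem hx))
      have haC := hsub (Finset.mem_insert_self a S')
      refine ⟨⟨a.rows ∩ α.rows, a.cols ∪ α.cols⟩, join_mem hZ haC hα, ?_⟩
      intro β hβ
      rcases Finset.mem_insert.1 hβ with rfl | hβ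
      · exact ⟨Finset.subset_union_left, Finset.inter_subset_left⟩
      · obtain ⟨h1, h2⟩ := hle β hβ
        exact ⟨h1.trans Finset.subset_union_right, Finset.inter_subset_right.trans h2⟩

lemma exists_perm_diag {N j : ℕ} (f : Fin j → Fin N) (hf : Function.Injective f) :
    ∃ σ : Equiv.Perm (Fin N), ∀ i : Fin j, ((σ (f i)) : ℕ) = (i : ℕ) := by
  classical
  have hjN : j ≤ N := by simpa using Fintype.card_le_of_injective f hf
  let F : Fin j → {x : Fin N // x ∈ Finset.univ.image f} :=
    fun i => ⟨f i, Finset.mem_image_of_mem f (Finset.mem_univ i)⟩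
  have hbij : Function.Bijective F := by
    constructor
    · intro a b hab
      exact hf (congrArg Subtype.val hab)
    · rintro ⟨x, hx⟩
      obtain ⟨i, _, hi⟩ := Finset.mem_image.1 hx
      exact ⟨i, Subtype.ext hi⟩
  let φ : Fin j ≃ {x : Fin N // x ∈ Finset.univ.image f} := Equiv.ofBijective F hbij
  let low : Fin j ≃ {x : Fin N // (x : ℕ) < j} :=
    { toFun := fun i => ⟨⟨i.1, lt_of_lt_of_le i.2 hjN⟩, i.2⟩
      invFun := fun x => ⟨x.1.1, x.2⟩
      left_inv := fun i => rfl
      right_inv := fun x => rfl }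
  refine ⟨(φ.symm.trans low).extendSubtype, ?_⟩
  intro i
  rw [Equiv.extendSubtype_apply_of_mem _ (f i) (Finset.mem_image_of_mem f (Finset.mem_univ i))]
  have h1 : φ.symm ⟨f i, Finset.mem_image_of_mem f (Finset.mem_univ i)⟩ = i := by
    rw [Equiv.symm_apply_eq]
    exact Subtype.ext rfl
  simp [Equiv.trans_apply, h1, low]


/-- If no row belongs to every `(k-1)`-cover of `Z`, then after
permuting rows and columns so that the `(k-1)`-assignment of zeros occupies the diagonal
positions `(1,1), …, (k-1,k-1)`, the cover consisting of the first `k-1` columns is a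
`(k-1)`-cover of `Z`; equivalently, `Q_{k,Z}` has a maximal element whose cover uses
only columns. -/
theorem maximal_cover_all_columns {m n k : ℕ}
    (Z : Finset (Fin m × Fin n)) (hk : 1 ≤ k)
    (hZ : HasIndepZeros (k - 1) Z)
    (hrow : ∀ r : Fin m, ∃ α ∈ criticalCovers (k - 1) Z, r ∉ α.rows) :
    (∃ α ∈ criticalCovers (k - 1) Z, α.rows = ∅ ∧
      ∀ β ∈ criticalCovers (k - 1) Z, β ≤ α) ∧
    ∃ σ : Equiv.Perm (Fin m), ∃ τ : Equiv.Perm (Fin n),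
      (colCover m n (k - 1)).Covers (Z.image fun p => (σ p.1, τ p.2)) ∧
      ∃ A ⊆ Z.image fun p => (σ p.1, τ p.2), IsAssignment (k - 1) A ∧
        ∀ p ∈ A, (p.1 : ℕ) = (p.2 : ℕ) ∧ (p.1 : ℕ) < k - 1 := by
  classical
  have hne : (criticalCovers (k - 1) Z).Nonempty := by
    rcases Nat.eq_zero_or_pos m with hm | hm
    · subst hm
      obtain ⟨A, hAZ, hAcard, _⟩ := hZ
      have hZe : Z = ∅ := Finset.eq_empty_of_isEmpty Z
      have hAe : A = ∅ := Finset.subset_empty.1 (hZe ▸ hAZ)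
      have hj0 : k - 1 = 0 := by rw [← hAcard, hAe, Finset.card_empty]
      refine ⟨⟨∅, ∅⟩, ?_⟩
      simp [criticalCovers, Cover.Covers, Cover.size, hZe, hj0]
    · obtain ⟨α, hα, _⟩ := hrow ⟨0, hm⟩
      exact ⟨α, hα⟩
  obtain ⟨αm, hαm, hmax⟩ := exists_top hZ (criticalCovers (k - 1) Z) hne subset_rfl
  have hrows : αm.rows = ∅ := by
    rw [Finset.eq_empty_iff_forall_notMem]
    intro r hr
    obtain ⟨β, hβ, hrβ⟩ := hrow r
    exact hrβ ((hmax β hβ).2 hr)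
  have hmem := hαm
  simp only [criticalCovers, Finset.mem_filter, Finset.mem_univ, true_and] at hmem
  obtain ⟨hcov, hsize⟩ := hmem
  have hCcard : αm.cols.card = k - 1 := by
    simp only [Cover.size, hrows, Finset.card_empty, Nat.zero_add] at hsize
    exact hsize
  obtain ⟨A, hAZ, hAcard, hAind⟩ := hZ
  have hsndC : ∀ p ∈ A, p.2 ∈ αm.cols := by
    intro p hp
    rcases hcov p (hAZ hp) with h | h
    · rw [hrows] at h; exact absurd h (Finset.notMem_empty _)
    · exact h
  have hsndInj : Set.InjOn Prod.snd (A : Set (Fin m × Fin n)) := by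
    intro p hp q hq h
    by_contra hne
    exact (hAind p hp q hq hne).2 h
  have himgcard : (A.image Prod.snd).card = k - 1 := by
    rw [Finset.card_image_of_injOn hsndInj, hAcard]
  have himg : A.image Prod.snd = αm.cols := by
    apply Finset.eq_of_subset_of_card_le
    · intro x hx
      obtain ⟨p, hp, rfl⟩ := Finset.mem_image.1 hx
      exact hsndC p hp
    · rw [himgcard, hCcard]
  have hAfin : Fintype.card ↥A = k - 1 := by rw [Fintype.card_coe, hAcard]
  let e : ↥A ≃ Fin (k - 1) := Fintype.equivFinOfCardEq hAfin
  have hfinj : Function.Injective (fun i : Fin (k - 1) => ((e.symm i : ↥A) : Fin m × Fin n).1) := by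
    intro a b hab
    by_contra hne
    have h1 : (e.symm a : ↥A) ≠ e.symm b := fun h => hne (e.symm.injective h)
    have h2 : ((e.symm a : ↥A) : Fin m × Fin n) ≠ ((e.symm b : ↥A) : Fin m × Fin n) :=
      fun h => h1 (Subtype.ext h)
    exact (hAind _ (e.symm a).2 _ (e.symm b).2 h2).1 hab
  have hginj : Function.Injective (fun i : Fin (k - 1) => ((e.symm i : ↥A) : Fin m × Fin n).2) := by
    intro a b hab
    by_contra hne
    have h1 : (e.symm a : ↥A) ≠ e.symm b := fun h => hne (e.symm.injective h)
    have h2 : ((e.symm a : ↥A) : Fin m × Fin n) ≠ ((e.symm b : ↥A) : Fin m × Fin n) :=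
      fun h => h1 (Subtype.ext h)
    exact (hAind _ (e.symm a).2 _ (e.symm b).2 h2).2 hab
  obtain ⟨σ, hσ⟩ := exists_perm_diag _ hfinj
  obtain ⟨τ, hτ⟩ := exists_perm_diag _ hginj
  have hkey : ∀ p, ∀ hp : p ∈ A,
      ((σ p.1 : Fin m) : ℕ) = ((e ⟨p, hp⟩ : Fin (k - 1)) : ℕ) ∧
      ((τ p.2 : Fin n) : ℕ) = ((e ⟨p, hp⟩ : Fin (k - 1)) : ℕ) := by
    intro p hp
    have h1 := hσ (e ⟨p, hp⟩)
    have h2 := hτ (e ⟨p, hp⟩)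
    rw [Equiv.symm_apply_apply] at h1 h2
    exact ⟨h1, h2⟩
  refine ⟨⟨αm, hαm, hrows, hmax⟩, σ, τ, ?_, ?_⟩
  · intro q hq
    obtain ⟨p, hpZ, rfl⟩ := Finset.mem_image.1 hq
    right
    have hp2 : p.2 ∈ αm.cols := by
      rcases hcov p hpZ with h | h
      · rw [hrows] at h; exact absurd h (Finset.notMem_empty _)
      · exact h
    rw [← himg] at hp2
    obtain ⟨p', hp', h2⟩ := Finset.mem_image.1 hp2
    simp only [colCover, Finset.mem_filter, Finset.mem_univ, true_and]
    rw [← h2]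
    have h3 := (hkey p' hp').2
    have h4 := (e ⟨p', hp'⟩).isLt
    omega
  · have hinj : Function.Injective (fun p : Fin m × Fin n => ((σ p.1, τ p.2) : Fin m × Fin n)) := by
      intro a b hab
      simp only [Prod.mk.injEq] at hab
      exact Prod.ext (σ.injective hab.1) (τ.injective hab.2)
    refine ⟨A.image (fun p => (σ p.1, τ p.2)), Finset.image_subset_image hAZ, ⟨?_, ?_⟩, ?_⟩
    · rw [Finset.card_image_of_injective _ hinj, hAcard]
    · intro q hq q' hq' hne
      obtain ⟨p, hp, rfl⟩ := Finset.mem_image.1 hq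
      obtain ⟨p', hp', rfl⟩ := Finset.mem_image.1 hq'
      have hpp : p ≠ p' := by rintro rfl; exact hne rfl
      obtain ⟨h1, h2⟩ := hAind p hp p' hp' hpp
      exact ⟨fun h => h1 (σ.injective h), fun h => h2 (τ.injective h)⟩
    · intro q hq
      obtain ⟨p, hp, rfl⟩ := Finset.mem_image.1 hq
      obtain ⟨h1, h2⟩ := hkey p hp
      have h3 := (e ⟨p, hp⟩).isLt
      dsimp only
      exact ⟨by omega, by omega⟩

end Kassign
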